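/- For all y > 0, G_{σ1,σ2,R,n}(y) ≥ 1/σ1² − 1/σ2² − R²/(n σ1⁴). In particular, if R < σ1² √(n(1/σ1² − 1/σ2²)), then G_{σ1,σ2,R,n}(y) > 0 for all y > 0, so G_{σ1,σ2,R,n} has no sign change on (0,∞). -/
import Mathlib


open MeasureTheory Real Filter

noncomputable section

abbrev EucSp (n : ℕ) := EuclideanSpace ℝ (Fin n)

/-- Lebesgue density of the Gaussian measure `N(x, σ² Iₙ)` on `ℝⁿ`. -/
def gaussDensity (n : ℕ) (σ : ℝ) (x y : EucSp n) : ℝ :=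
  (2 * π * σ ^ 2) ^ (-(n : ℝ) / 2) * Real.exp (-‖y - x‖ ^ 2 / (2 * σ ^ 2))

/-- The Gaussian measure `N(x, σ² Iₙ)` on `ℝⁿ`. -/
def gaussMeasure (n : ℕ) (σ : ℝ) (x : EucSp n) : Measure (EucSp n) :=
  volume.withDensity fun y => ENNReal.ofReal (gaussDensity n σ x y)

/-- Convolution `P ∗ N(0, σ² Iₙ)`. -/
def convGauss (n : ℕ) (P : Measure (EucSp n)) (σ : ℝ) : Measure (EucSp n) :=
  Measure.map (fun p : EucSp n × EucSp n => p.1 + p.2) (P.prod (gaussMeasure n σ 0))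

/-- Kullback–Leibler divergence (real-valued). -/
def KL {α : Type*} [MeasurableSpace α] (μ ν : Measure α) : ℝ :=
  ∫ y, Real.log (μ.rnDeriv ν y).toReal ∂μ

/-- Secrecy-density of `P` at `x`. -/
def Xi (n : ℕ) (σ1 σ2 : ℝ) (P : Measure (EucSp n)) (x : EucSp n) : ℝ :=
  KL (gaussMeasure n σ1 x) (convGauss n P σ1) - KL (gaussMeasure n σ2 x) (convGauss n P σ2)

/-- Secrecy-information of `P`. -/
def secInfo (n : ℕ) (σ1 σ2 : ℝ) (P : Measure (EucSp n)) : ℝ :=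
  ∫ x, Xi n σ1 σ2 P x ∂P

/-- Secrecy-capacity under the amplitude constraint `‖X‖ ≤ R`. -/
def Cs (n : ℕ) (σ1 σ2 R : ℝ) : ℝ :=
  sSup {r : ℝ | ∃ P : Measure (EucSp n), IsProbabilityMeasure P ∧
    (∀ᵐ x ∂P, ‖x‖ ≤ R) ∧ secInfo n σ1 σ2 P = r}

/-- Uniform probability measure on the sphere `‖x‖ = R` (pushforward of the
standard Gaussian under the radial projection onto the sphere). -/
def sphereUniform (n : ℕ) (R : ℝ) : Measure (EucSp n) :=
  Measure.map (fun z => (R / ‖z‖) • z) (gaussMeasure n 1 0)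

/-- Modified Bessel function of the first kind. -/
def besselI (ν x : ℝ) : ℝ :=
  ∑' m : ℕ, (x / 2) ^ (2 * (m : ℝ) + ν) / ((m.factorial : ℝ) * Real.Gamma ((m : ℝ) + ν + 1))

/-- Ratio `h_ν = I_ν / I_{ν-1}` of modified Bessel functions. -/
def besselh (ν x : ℝ) : ℝ := besselI ν x / besselI (ν - 1) x

/-- The function `f` characterizing the low amplitude regime. -/
def fFun (n : ℕ) (σ1 σ2 R : ℝ) (e1 : EucSp n) : ℝ :=
  ∫ s in (σ1 ^ 2)..(σ2 ^ 2),
    ((∫ z, (besselh ((n : ℝ) / 2) (R * ‖Real.sqrt s • z‖ / s)) ^ 2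
        + (besselh ((n : ℝ) / 2) (R * ‖R • e1 + Real.sqrt s • z‖ / s)) ^ 2
        ∂gaussMeasure n 1 0) - 1) / s ^ 2

/-- The function `G_{σ1,σ2,R,n}` on `(0,∞)`. -/
def Gfun (n : ℕ) (σ1 σ2 R : ℝ) (e1 : EucSp (n + 2)) (y : ℝ) : ℝ :=
  (1 / σ2 ^ 2) *
      ((∫ w, (R / ‖y • e1 + w‖) * besselh ((n : ℝ) / 2) ((R / σ2 ^ 2) * ‖y • e1 + w‖)
          ∂gaussMeasure (n + 2) (Real.sqrt (σ2 ^ 2 - σ1 ^ 2)) 0) - 1)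
    - (1 / σ1 ^ 2) * ((R / y) * besselh ((n : ℝ) / 2) ((R / σ1 ^ 2) * y) - 1)

/-- A function changes sign at most once on `(0,∞)`. -/
def AtMostOneSignChange (G : ℝ → ℝ) : Prop :=
  ∀ y1 y2 y3 : ℝ, 0 < y1 → y1 < y2 → y2 < y3 →
    ¬(G y1 * G y2 < 0 ∧ G y2 * G y3 < 0)

/-- Topological support of a measure: points all of whose open neighbourhoods
have positive measure. -/
def msupport {α : Type*} [TopologicalSpace α] [MeasurableSpace α] (μ : Measure α) : Set α :=
  {x | ∀ U : Set α, IsOpen U → x ∈ U → 0 < μ U}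

end

lemma besselI_nonneg {ν x : ℝ} (hν : -1 < ν) (hx : 0 ≤ x) : 0 ≤ besselI ν x := by
  apply tsum_nonneg
  intro m
  have h1 : 0 ≤ (x / 2) ^ (2 * (m : ℝ) + ν) := Real.rpow_nonneg (by linarith) _
  have h2 : 0 < Real.Gamma ((m : ℝ) + ν + 1) := by
    apply Real.Gamma_pos_of_pos
    have : (0 : ℝ) ≤ m := Nat.cast_nonneg m
    linarith
  exact div_nonneg h1 (mul_nonneg (Nat.cast_nonneg _) h2.le)

lemma besselh_nonneg {ν x : ℝ} (hν : 0 < ν) (hx : 0 ≤ x) : 0 ≤ besselh ν x :=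
  div_nonneg (besselI_nonneg (by linarith) hx) (besselI_nonneg (by linarith) hx)

lemma besselh_le {ν x : ℝ} (hν : 0 < ν) (hx : 0 < x) :
    besselh ν x ≤ x / (2 * ν) := by
  have hx2 : (0 : ℝ) < x / 2 := by linarith
  have hc : (0 : ℝ) < x / (2 * ν) := by positivity
  set f : ℕ → ℝ := fun m =>
    (x / 2) ^ (2 * (m : ℝ) + ν) / ((m.factorial : ℝ) * Real.Gamma ((m : ℝ) + ν + 1))
    with hfdef
  set g : ℕ → ℝ := fun m =>
    (x / 2) ^ (2 * (m : ℝ) + (ν - 1)) / ((m.factorial : ℝ) * Real.Gamma ((m : ℝ) + (ν - 1) + 1))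
    with hgdef
  have hgoal : besselh ν x = (∑' m, f m) / (∑' m, g m) := rfl
  rw [hgoal]
  have hgpos : ∀ m, 0 < g m := by
    intro m
    have hm : (0 : ℝ) ≤ m := Nat.cast_nonneg m
    have hΓ : 0 < Real.Gamma ((m : ℝ) + (ν - 1) + 1) := Real.Gamma_pos_of_pos (by linarith)
    have h1 := Real.rpow_pos_of_pos hx2 (2 * (m : ℝ) + (ν - 1))
    have hfact : (0 : ℝ) < m.factorial := Nat.cast_pos.mpr m.factorial_pos
    exact div_pos h1 (mul_pos hfact hΓ)
  have hfnn : ∀ m, 0 ≤ f m := by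
    intro m
    have hm : (0 : ℝ) ≤ m := Nat.cast_nonneg m
    have hΓ : 0 < Real.Gamma ((m : ℝ) + ν + 1) := Real.Gamma_pos_of_pos (by linarith)
    have hfact : (0 : ℝ) < m.factorial := Nat.cast_pos.mpr m.factorial_pos
    exact div_nonneg (Real.rpow_nonneg hx2.le _) (mul_pos hfact hΓ).le
  have key : ∀ m, f m ≤ (x / (2 * ν)) * g m := by
    intro m
    have hm : (0 : ℝ) ≤ m := Nat.cast_nonneg m
    have ht : (0 : ℝ) < (m : ℝ) + ν := by linarith
    have hΓ : Real.Gamma ((m : ℝ) + ν + 1) = ((m : ℝ) + ν) * Real.Gamma ((m : ℝ) + ν) :=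
      Real.Gamma_add_one ht.ne'
    have hΓpos : 0 < Real.Gamma ((m : ℝ) + ν) := Real.Gamma_pos_of_pos ht
    have hfact : (0 : ℝ) < m.factorial := Nat.cast_pos.mpr m.factorial_pos
    have e1 : (x / 2) ^ (2 * (m : ℝ) + ν) = (x / 2) ^ (2 * (m : ℝ) + (ν - 1)) * (x / 2) := by
      rw [← Real.rpow_add_one (ne_of_gt hx2)]
      congr 1; ring
    have harg : (m : ℝ) + (ν - 1) + 1 = (m : ℝ) + ν := by ring
    have hg' : g m = (x / 2) ^ (2 * (m : ℝ) + (ν - 1)) /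
        ((m.factorial : ℝ) * Real.Gamma ((m : ℝ) + ν)) := by
      simp only [hgdef, harg]
    have e2 : f m = ((x / 2) / ((m : ℝ) + ν)) * g m := by
      rw [hg']
      simp only [hfdef]
      rw [e1, hΓ]
      field_simp
    have hdiv : (x / 2) / ((m : ℝ) + ν) ≤ x / (2 * ν) := by
      rw [show x / (2 * ν) = (x / 2) / ν by ring]
      gcongr
      linarith
    rw [e2]
    exact mul_le_mul_of_nonneg_right hdiv (hgpos m).le
  by_cases hs : Summable g
  · have hsf : Summable f := Summable.of_nonneg_of_le hfnn key (hs.mul_left _)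
    have hG : 0 < ∑' m, g m :=
      lt_of_lt_of_le (hgpos 0) (Summable.le_tsum hs 0 fun j _ => (hgpos j).le)
    rw [div_le_iff₀ hG]
    calc (∑' m, f m) ≤ ∑' m, (x / (2 * ν)) * g m := Summable.tsum_le_tsum key hsf (hs.mul_left _)
      _ = (x / (2 * ν)) * ∑' m, g m := tsum_mul_left
  · rw [tsum_eq_zero_of_not_summable hs, div_zero]
    exact hc.le

/-- The lower bound `G(y) ≥ 1/σ1² − 1/σ2² − R²/(nσ1⁴)` for all `y > 0`;
in particular, if `R < σ1²√(n(1/σ1² − 1/σ2²))` then `G > 0` on `(0,∞)`, so `G` has no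
sign change there. -/
theorem Gfun_lower_bound
    (n : ℕ) (hn : 1 ≤ n) (σ1 σ2 R : ℝ) (hσ1 : 0 < σ1) (hσ12 : σ1 < σ2) (hR : 0 < R)
    (e1 : EucSp (n + 2)) (he1 : ‖e1‖ = 1) :
    (∀ y : ℝ, 0 < y →
      1 / σ1 ^ 2 - 1 / σ2 ^ 2 - R ^ 2 / (n * σ1 ^ 4) ≤ Gfun n σ1 σ2 R e1 y) ∧
    (R < σ1 ^ 2 * Real.sqrt (n * (1 / σ1 ^ 2 - 1 / σ2 ^ 2)) →
      ∀ y : ℝ, 0 < y → 0 < Gfun n σ1 σ2 R e1 y) := by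
  have hσ2 : (0 : ℝ) < σ2 := lt_trans hσ1 hσ12
  have hσ1sq : (0 : ℝ) < σ1 ^ 2 := by positivity
  have hσ2sq : (0 : ℝ) < σ2 ^ 2 := by positivity
  have hn' : (0 : ℝ) < n := by exact_mod_cast Nat.lt_of_lt_of_le Nat.zero_lt_one hn
  have hν : (0 : ℝ) < (n : ℝ) / 2 := by linarith
  have main : ∀ y : ℝ, 0 < y →
      1 / σ1 ^ 2 - 1 / σ2 ^ 2 - R ^ 2 / (n * σ1 ^ 4) ≤ Gfun n σ1 σ2 R e1 y := by
    intro y hy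
    unfold Gfun
    set A := ∫ w, (R / ‖y • e1 + w‖) * besselh ((n : ℝ) / 2) ((R / σ2 ^ 2) * ‖y • e1 + w‖)
        ∂gaussMeasure (n + 2) (Real.sqrt (σ2 ^ 2 - σ1 ^ 2)) 0 with hAdef
    set B := (R / y) * besselh ((n : ℝ) / 2) ((R / σ1 ^ 2) * y) with hBdef
    have hA : 0 ≤ A := by
      rw [hAdef]
      apply integral_nonneg
      intro w
      apply mul_nonneg (div_nonneg hR.le (norm_nonneg _))
      exact besselh_nonneg hν (by positivity)
    have hBle : besselh ((n : ℝ) / 2) ((R / σ1 ^ 2) * y) ≤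
        ((R / σ1 ^ 2) * y) / (2 * ((n : ℝ) / 2)) := besselh_le hν (by positivity)
    have h1 : ((R / σ1 ^ 2) * y) / (2 * ((n : ℝ) / 2)) = R * y / ((n : ℝ) * σ1 ^ 2) := by
      field_simp
    have hB : B ≤ R ^ 2 / ((n : ℝ) * σ1 ^ 2) := by
      rw [hBdef]
      calc (R / y) * besselh ((n : ℝ) / 2) ((R / σ1 ^ 2) * y)
          ≤ (R / y) * (R * y / ((n : ℝ) * σ1 ^ 2)) := by
            rw [← h1]; exact mul_le_mul_of_nonneg_left hBle (by positivity)
        _ = R ^ 2 / ((n : ℝ) * σ1 ^ 2) := by field_simp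
    have e4 : (1 / σ1 ^ 2) * (R ^ 2 / ((n : ℝ) * σ1 ^ 2)) = R ^ 2 / ((n : ℝ) * σ1 ^ 4) := by
      field_simp
    have t1 : -(1 / σ2 ^ 2) ≤ (1 / σ2 ^ 2) * (A - 1) := by
      have h0 : 0 ≤ (1 / σ2 ^ 2) * A := mul_nonneg (by positivity) hA
      rw [mul_sub, mul_one]
      linarith
    have t2 : (1 / σ1 ^ 2) * (B - 1) ≤ R ^ 2 / ((n : ℝ) * σ1 ^ 4) - 1 / σ1 ^ 2 := by
      have h0 : (1 / σ1 ^ 2) * B ≤ (1 / σ1 ^ 2) * (R ^ 2 / ((n : ℝ) * σ1 ^ 2)) :=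
        mul_le_mul_of_nonneg_left hB (by positivity)
      rw [e4] at h0
      rw [mul_sub, mul_one]
      linarith
    linarith
  refine ⟨main, fun hRsmall y hy => ?_⟩
  have hD : 0 < 1 / σ1 ^ 2 - 1 / σ2 ^ 2 := by
    have h12 : σ1 ^ 2 < σ2 ^ 2 := by nlinarith
    have : 1 / σ2 ^ 2 < 1 / σ1 ^ 2 := one_div_lt_one_div_of_lt hσ1sq h12
    linarith
  have h0 : 0 ≤ (n : ℝ) * (1 / σ1 ^ 2 - 1 / σ2 ^ 2) := mul_nonneg hn'.le hD.le
  have hs := Real.sq_sqrt h0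
  have hsn := Real.sqrt_nonneg ((n : ℝ) * (1 / σ1 ^ 2 - 1 / σ2 ^ 2))
  have hsq : R ^ 2 < σ1 ^ 4 * ((n : ℝ) * (1 / σ1 ^ 2 - 1 / σ2 ^ 2)) := by
    have hmm := mul_self_lt_mul_self hR.le hRsmall
    calc R ^ 2 = R * R := by ring
      _ < (σ1 ^ 2 * Real.sqrt ((n : ℝ) * (1 / σ1 ^ 2 - 1 / σ2 ^ 2))) *
          (σ1 ^ 2 * Real.sqrt ((n : ℝ) * (1 / σ1 ^ 2 - 1 / σ2 ^ 2))) := hmm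
      _ = σ1 ^ 4 * Real.sqrt ((n : ℝ) * (1 / σ1 ^ 2 - 1 / σ2 ^ 2)) ^ 2 := by ring
      _ = σ1 ^ 4 * ((n : ℝ) * (1 / σ1 ^ 2 - 1 / σ2 ^ 2)) := by rw [hs]
  have hfinal : R ^ 2 / ((n : ℝ) * σ1 ^ 4) < 1 / σ1 ^ 2 - 1 / σ2 ^ 2 := by
    rw [div_lt_iff₀ (by positivity : (0 : ℝ) < (n : ℝ) * σ1 ^ 4)]
    have heq : σ1 ^ 4 * ((n : ℝ) * (1 / σ1 ^ 2 - 1 / σ2 ^ 2)) =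
        (1 / σ1 ^ 2 - 1 / σ2 ^ 2) * ((n : ℝ) * σ1 ^ 4) := by ring
    linarith
  linarith [main y hy]
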